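/- Let A be an m×m real symmetric positive semidefinite matrix with Moore–Penrose inverse A†, let α be a real scalar, and define the Newton–Raphson iterates A₀ = α A, A_{k+1} = 2 A_k − A_k A A_k. Then for every k ≥ 0 the spectral norm satisfies the quadratic contraction ‖A A† − A A_{k+1}‖ ≤ ‖A A† − A A_k‖². -/

import Mathlib

open Matrix Filter

/-!
With `P = A A†`, every iterate satisfies `N_k P = N_k` (true for `N_0 = α A` because `A P = A`
for symmetric `A`, and preserved by the Newton step). Together with `P A = A` this makes the
residual square exactly: `P - A N_{k+1} = (P - A N_k)²`, and the spectral norm is submultiplicative.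
-/

/-- The spectral norm (ℓ²-operator norm) of a real square matrix. -/
noncomputable def specNorm {m : ℕ} (M : Matrix (Fin m) (Fin m) ℝ) : ℝ :=
  ‖Matrix.toEuclideanCLM (𝕜 := ℝ) M‖

/-- `Ad` is the Moore–Penrose inverse of `A`: the Penrose equations
`A Ad A = A`, `Ad A Ad = Ad`, `(A Ad)ᵀ = A Ad`, `(Ad A)ᵀ = Ad A`. -/
def IsMoorePenroseInv {m n : ℕ} (A : Matrix (Fin m) (Fin n) ℝ)
    (Ad : Matrix (Fin n) (Fin m) ℝ) : Prop :=
  A * Ad * A = A ∧ Ad * A * Ad = Ad ∧ (A * Ad)ᵀ = A * Ad ∧ (Ad * A)ᵀ = Ad * A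

section NewtonStep

variable {𝕜 R : Type*} [CommRing 𝕜] [Ring R] [Algebra 𝕜 R]

theorem newton_step_mul_eq_self {a p x : R} (hxp : x * p = x) :
    ((2 : 𝕜) • x - x * a * x) * p = (2 : 𝕜) • x - x * a * x := by
  rw [sub_mul, smul_mul_assoc, hxp, mul_assoc, hxp]

theorem newton_iterate_mul_eq_self {a p : R} (hap : a * p = a) (c : 𝕜) {N : ℕ → R}
    (h0 : N 0 = c • a) (hrec : ∀ k, N (k + 1) = (2 : 𝕜) • N k - N k * a * N k) (k : ℕ) :
    N k * p = N k := by
  induction k with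
  | zero => rw [h0, smul_mul_assoc, hap]
  | succ k ih => rw [hrec k, newton_step_mul_eq_self ih]

theorem sub_mul_newton_step_eq_sq {a b x : R} (haba : a * b * a = a) (hx : x * (a * b) = x) :
    a * b - a * ((2 : 𝕜) • x - x * a * x) = (a * b - a * x) ^ 2 := by
  have hpp : a * b * (a * b) = a * b := by rw [← mul_assoc, haba]
  have hpx : a * b * (a * x) = a * x := by rw [← mul_assoc, haba]
  have hxp : a * x * (a * b) = a * x := by rw [mul_assoc, hx]
  rw [sq, mul_sub, mul_smul_comm, sub_mul, mul_sub, mul_sub, hpp, hpx, hxp, ofNat_smul_eq_nsmul]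
  noncomm_ring

end NewtonStep

theorem IsMoorePenroseInv.mul_mul_self_eq {m : ℕ} {A Ad : Matrix (Fin m) (Fin m) ℝ}
    (hA : A.IsSymm) (hMP : IsMoorePenroseInv A Ad) : A * (A * Ad) = A := by
  simpa only [transpose_mul, hMP.2.2.1, hA.eq] using congrArg transpose hMP.1

theorem specNorm_mul_le {m : ℕ} (M M' : Matrix (Fin m) (Fin m) ℝ) :
    specNorm (M * M') ≤ specNorm M * specNorm M' := by
  simpa only [specNorm, map_mul] using norm_mul_le _ _

/-- In spectral norm, the quadratic contraction
`‖A Ad - A N_{k+1}‖ ≤ ‖A Ad - A N_k‖²` holds. -/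
theorem newton_raphson_quadratic_contraction {m : ℕ}
    (A Ad : Matrix (Fin m) (Fin m) ℝ)
    (hA : A.PosSemidef)
    (hMP : IsMoorePenroseInv A Ad)
    (α : ℝ) (N : ℕ → Matrix (Fin m) (Fin m) ℝ)
    (hN0 : N 0 = α • A)
    (hNrec : ∀ k, N (k + 1) = (2 : ℝ) • N k - N k * A * N k) :
    ∀ k, specNorm (A * Ad - A * N (k + 1)) ≤ specNorm (A * Ad - A * N k) ^ 2 := by
  intro k
  have hAP : A * (A * Ad) = A := hMP.mul_mul_self_eq (isHermitian_iff_isSymm.mp hA.1)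
  have hNP : N k * (A * Ad) = N k := newton_iterate_mul_eq_self hAP α hN0 hNrec k
  rw [hNrec k, sub_mul_newton_step_eq_sq hMP.1 hNP, sq, sq]
  exact specNorm_mul_le _ _
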